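/- Let m = (x,y), m' = (x',y') be points in the closed upper half-space (x, x' ≥ 0, not both zero together with y = y'), r = |y − y'|, ρ² = (x+x')² + r². Define the (d+1)×(d+1) matrix τ with entries τ₀₀ = 1 − 2r²/ρ², τ₀ⱼ = −2(x+x')(yⱼ−y'ⱼ)/ρ², τⱼ₀ = 2(x+x')(yⱼ−y'ⱼ)/ρ², τⱼₗ = δⱼₗ − 2(yⱼ−y'ⱼ)(yₗ−y'ₗ)/ρ² for j,l ∈ {1,…,d}. Then τ is a special orthogonal matrix. -/

import Mathlib

/-!
With `w = (x + x', y - y')`, so that `w ⬝ᵥ w = ρ²`, the matrix `τ` is the product `H_w H_{e₀}` of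
the Householder reflections in the hyperplanes `w⊥` and `e₀⊥`. Each reflection is a symmetric
involution with determinant `-1`, so their product is orthogonal with determinant `1`.
-/

open Matrix

namespace Matrix

variable {n K : Type*} [Fintype n] [DecidableEq n] [Field K]

def householder (w : n → K) : Matrix n n K :=
  1 - (2 / (w ⬝ᵥ w)) • vecMulVec w w

theorem householder_apply (w : n → K) (i j : n) :
    householder w i j = (if i = j then 1 else 0) - 2 / (w ⬝ᵥ w) * (w i * w j) := by
  simp [householder, one_apply, vecMulVec_apply]

theorem transpose_householder (w : n → K) : (householder w)ᵀ = householder w := by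
  simp [householder, transpose_sub, transpose_smul]

theorem householder_mul_self {w : n → K} (hw : w ⬝ᵥ w ≠ 0) :
    householder w * householder w = 1 := by
  have hsq : vecMulVec w w * vecMulVec w w = (w ⬝ᵥ w) • vecMulVec w w := by
    rw [vecMulVec_mul_vecMulVec, vecMulVec_smul]
  simp only [householder, Matrix.mul_sub, Matrix.sub_mul, Matrix.one_mul, Matrix.mul_one,
    Matrix.smul_mul, Matrix.mul_smul, hsq, smul_smul, div_mul_cancel₀ _ hw]
  module

theorem det_householder {w : n → K} (hw : w ⬝ᵥ w ≠ 0) : (householder w).det = -1 := by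
  rw [householder, sub_eq_add_neg, ← neg_smul, ← smul_vecMulVec, vecMulVec_eq Unit,
    det_one_add_replicateCol_mul_replicateRow, dotProduct_smul, smul_eq_mul,
    neg_mul, div_mul_cancel₀ _ hw]
  ring

theorem householder_mem_orthogonalGroup {w : n → K} (hw : w ⬝ᵥ w ≠ 0) :
    householder w ∈ orthogonalGroup n K := by
  rw [mem_orthogonalGroup_iff, transpose_householder, householder_mul_self hw]

theorem householder_mul_householder_mem_specialOrthogonalGroup {v w : n → K}
    (hv : v ⬝ᵥ v ≠ 0) (hw : w ⬝ᵥ w ≠ 0) :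
    householder v * householder w ∈ specialOrthogonalGroup n K := by
  refine mem_specialOrthogonalGroup_iff.2 ⟨?_, ?_⟩
  · exact mul_mem (householder_mem_orthogonalGroup hv) (householder_mem_orthogonalGroup hw)
  · rw [det_mul, det_householder hv, det_householder hw]
    norm_num

theorem householder_single (i : n) :
    householder (Pi.single i 1 : n → K) = diagonal (Function.update 1 i (-1)) := by
  ext j k
  rw [householder_apply, diagonal_apply]
  rcases eq_or_ne j k with rfl | hjk
  · rcases eq_or_ne j i with rfl | hji
    · norm_num
    · simp [hji]
  · simp [hjk, Pi.single_apply]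
    rintro rfl rfl
    exact absurd rfl hjk

end Matrix

theorem stmt11 (d : ℕ) (x x' : ℝ) (y y' : Fin d → ℝ)
    (hρ : 0 < (x + x') ^ 2 + ∑ j, (y j - y' j) ^ 2) :
    (Matrix.of fun i j : Unit ⊕ Fin d =>
      match i, j with
      | Sum.inl _, Sum.inl _ =>
          1 - 2 * (∑ j, (y j - y' j) ^ 2) / ((x + x') ^ 2 + ∑ j, (y j - y' j) ^ 2)
      | Sum.inl _, Sum.inr l =>
          -2 * (x + x') * (y l - y' l) / ((x + x') ^ 2 + ∑ j, (y j - y' j) ^ 2)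
      | Sum.inr k, Sum.inl _ =>
          2 * (x + x') * (y k - y' k) / ((x + x') ^ 2 + ∑ j, (y j - y' j) ^ 2)
      | Sum.inr k, Sum.inr l =>
          (if k = l then (1 : ℝ) else 0) -
            2 * (y k - y' k) * (y l - y' l) / ((x + x') ^ 2 + ∑ j, (y j - y' j) ^ 2))
      ∈ Matrix.specialOrthogonalGroup (Unit ⊕ Fin d) ℝ := by
  set w : Unit ⊕ Fin d → ℝ := Sum.elim (fun _ => x + x') (fun j => y j - y' j)
  have hww : w ⬝ᵥ w = (x + x') ^ 2 + ∑ j, (y j - y' j) ^ 2 := by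
    simp [w, dotProduct, Fintype.sum_sum_type, sq]
  have hsingle : (Pi.single (Sum.inl ()) 1 : Unit ⊕ Fin d → ℝ) ⬝ᵥ Pi.single (Sum.inl ()) 1 ≠ 0 := by simp
  convert householder_mul_householder_mem_specialOrthogonalGroup (hww ▸ hρ.ne') hsingle using 1
  rw [householder_single]
  ext (_ | k) (_ | l) <;> simp [mul_diagonal, householder_apply, hww, w]
  · field_simp
    ring
  all_goals ring
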